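/- arXiv:1211.3227 — 5 statements merged into one kernel-verified Lean document; each statement's English description precedes it below -/
import Mathlib

section
/- Let γ : I → ℝ^n be a self-contracted curve and let t ∈ I be a point at which γ is differentiable. Then ⟨γ′(t), γ(u) − γ(t)⟩ ≥ 0 for all u ∈ I with u > t. -/
/-! For `t ≤ s ≤ u`, self-contraction puts `γ s` in the closed ball about `γ u` through `γ t`;
expanding `‖(γ s - γ t) - (γ u - γ t)‖² ≤ ‖γ u - γ t‖²` gives
`2 ⟪γ s - γ t, γ u - γ t⟫ ≥ ‖γ s - γ t‖² ≥ 0`. So `s ↦ ⟪γ s - γ t, γ u - γ t⟫` is minimal on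
`[t, u]` at `t`, and its right derivative `⟪γ' t, γ u - γ t⟫` is nonnegative. -/

open Set Metric RealInnerProductSpace

def SelfContracted {n : ℕ} (I : Set ℝ) (γ : ℝ → EuclideanSpace ℝ (Fin n)) : Prop :=
  ∀ t₁ ∈ I, ∀ t₂ ∈ I, ∀ t₃ ∈ I, t₁ ≤ t₂ → t₂ ≤ t₃ →
    ‖γ t₂ - γ t₃‖ ≤ ‖γ t₁ - γ t₃‖

open Filter Topology

theorem inner_sub_sub_nonneg_of_norm_sub_le {E : Type*} [NormedAddCommGroup E]
    [InnerProductSpace ℝ E] {x y z : E} (h : ‖y - z‖ ≤ ‖x - z‖) :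
    0 ≤ ⟪y - x, z - x⟫ := by
  have hsq : ‖y - z‖ ^ 2 ≤ ‖z - x‖ ^ 2 := by
    rw [norm_sub_rev z x]
    exact pow_le_pow_left₀ (norm_nonneg _) h 2
  have hexpand := norm_sub_sq_real (y - x) (z - x)
  rw [sub_sub_sub_cancel_right] at hexpand
  nlinarith [sq_nonneg ‖y - x‖]

theorem IsLocalMinOn.hasDerivWithinAt_nonneg {f : ℝ → ℝ} {f' a : ℝ} {s : Set ℝ}
    (h : IsLocalMinOn f s a) (hf : HasDerivWithinAt f f' s a) (hs : ∃ᶠ x in 𝓝[>] a, x ∈ s) :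
    0 ≤ f' := by
  simpa using h.hasFDerivWithinAt_nonneg hf.hasFDerivWithinAt
    (one_mem_posTangentConeAt_iff_frequently.2 hs)

theorem SelfContracted.inner_sub_nonneg {n : ℕ} {I : Set ℝ} {γ : ℝ → EuclideanSpace ℝ (Fin n)}
    (hγ : SelfContracted I γ) {t s u : ℝ} (ht : t ∈ I) (hs : s ∈ I) (hu : u ∈ I)
    (hts : t ≤ s) (hsu : s ≤ u) : 0 ≤ ⟪γ s - γ t, γ u - γ t⟫ :=
  inner_sub_sub_nonneg_of_norm_sub_le (hγ t ht s hs u hu hts hsu)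

/-- If a self-contracted curve `γ : I → ℝⁿ` is differentiable at `t ∈ I`, with
derivative `v`, then `⟪v, γ(u) - γ(t)⟫ ≥ 0` for all `u ∈ I` with `u > t`. -/
theorem selfContracted_deriv_inner_nonneg {n : ℕ} (I : Set ℝ) (hI : I.OrdConnected)
    (γ : ℝ → EuclideanSpace ℝ (Fin n)) (hγ : SelfContracted I γ)
    (t : ℝ) (ht : t ∈ I) (v : EuclideanSpace ℝ (Fin n))
    (hv : HasDerivWithinAt γ v I t) :
    ∀ u ∈ I, t < u → 0 ≤ ⟪v, γ u - γ t⟫ := by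
  intro u hu htu
  set w := γ u - γ t
  have hIcc : Icc t u ⊆ I := hI.out ht hu
  have hmin : IsMinOn (fun s => ⟪γ s - γ t, w⟫) (Icc t u) t := fun s hs => by
    simpa using hγ.inner_sub_nonneg ht (hIcc hs) hu hs.1 hs.2
  have hderiv : HasDerivWithinAt (fun s => ⟪γ s - γ t, w⟫) ⟪v, w⟫ (Icc t u) t := by
    simpa using ((hv.mono hIcc).sub_const (γ t)).inner ℝ (hasDerivWithinAt_const t _ w)
  exact hmin.localize.hasDerivWithinAt_nonneg hderiv
    (Eventually.frequently (Icc_mem_nhdsGT htu))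
end

section
/- Let γ : I → ℝ^n be a Lipschitz curve, and define the reverse parametrization γ⁻ : I⁻ → ℝ^n on the opposite interval I⁻ = {−t : t ∈ I} by γ⁻(t) = γ(−t). Then γ is self-contracted if and only if γ⁻ is self-expanded. -/
open Set Metric RealInnerProductSpace

/-- A curve `γ : I → ℝⁿ` is *self-expanded* if it is Lipschitz on `I` and, at every point
`t ∈ I` where it is differentiable (within `I`), `⟪γ'(t), γ(t) - γ(u)⟫ ≥ 0` for
all `u ∈ I` with `u ≤ t`. -/
def SelfExpanded {n : ℕ} (I : Set ℝ) (γ : ℝ → EuclideanSpace ℝ (Fin n)) : Prop :=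
  (∃ K : NNReal, LipschitzOnWith K γ I) ∧
  ∀ t ∈ I, DifferentiableWithinAt ℝ γ I t →
    ∀ u ∈ I, u ≤ t → 0 ≤ ⟪derivWithin γ I t, γ t - γ u⟫

open MeasureTheory Filter Topology

/-! Both properties concern, along the reversed curve `c s = γ (-s)`, the squared distance
`φ s = ‖c s - c u‖ ^ 2` to an earlier point `c u`, whose derivative is `2 ⟪c' s, c s - c u⟫`.
Self-contraction says `φ` is nondecreasing for `s ≥ u`, so `φ` is maximal on `[u, t]` at `t` and
its left derivative there is nonnegative. Conversely, `φ` is Lipschitz, hence absolutely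
continuous, and by Rademacher's theorem its derivative exists and is nonnegative almost
everywhere, so `φ` is nondecreasing by the fundamental theorem of calculus. -/

theorem Set.OrdConnected.neg {α : Type*} [AddCommGroup α] [PartialOrder α] [IsOrderedAddMonoid α]
    {s : Set α} (hs : s.OrdConnected) : (-s).OrdConnected :=
  ⟨fun _ hx _ hy _ hz => hs.out hy hx ⟨neg_le_neg hz.2, neg_le_neg hz.1⟩⟩

theorem LipschitzOnWith.comp_neg {α : Type*} [PseudoEMetricSpace α] {f : ℝ → α} {K : NNReal}
    {s : Set ℝ} (hf : LipschitzOnWith K f s) : LipschitzOnWith K (fun t => f (-t)) (-s) :=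
  fun x hx y hy => by simpa only [edist_neg_neg] using hf hx hy

theorem IsMaxOn.nonneg_of_hasDerivWithinAt_Icc {f : ℝ → ℝ} {f' u t : ℝ} (hut : u < t)
    (hmax : IsMaxOn f (Icc u t) t) (hf : HasDerivWithinAt f f' (Icc u t) t) : 0 ≤ f' := by
  have hcone : u - t ∈ posTangentConeAt (Icc u t) t :=
    sub_mem_posTangentConeAt_of_segment_subset
      ((segment_symm ℝ t u).trans (segment_eq_Icc hut.le)).subset
  have hnonpos := hmax.localize.hasFDerivWithinAt_nonpos hf.hasFDerivWithinAt hcone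
  rw [ContinuousLinearMap.toSpanSingleton_apply, smul_eq_mul] at hnonpos
  exact nonneg_of_mul_nonpos_right hnonpos (sub_neg.2 hut)

theorem AbsolutelyContinuousOnInterval.le_of_ae_deriv_nonneg {f : ℝ → ℝ} {a b : ℝ}
    (hf : AbsolutelyContinuousOnInterval f a b) (hab : a ≤ b)
    (hf' : ∀ᵐ x, x ∈ Ioo a b → 0 ≤ deriv f x) : f a ≤ f b := by
  rw [← sub_nonneg, ← hf.integral_deriv_eq_sub]
  refine intervalIntegral.integral_nonneg_of_ae_restrict hab ?_
  rw [EventuallyLE, ← Measure.restrict_congr_set Ioo_ae_eq_Icc, ae_restrict_iff' measurableSet_Ioo]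
  exact hf'

section InnerProductSpace

variable {E : Type*} [NormedAddCommGroup E] [InnerProductSpace ℝ E] {c : ℝ → E}

theorem inner_derivWithin_sub_nonneg_of_isMaxOn {J : Set ℝ} {u t : ℝ} {p : E} (hut : u < t)
    (hJ : Icc u t ⊆ J) (hc : DifferentiableWithinAt ℝ c J t)
    (hmax : ∀ s ∈ Icc u t, ‖c s - p‖ ≤ ‖c t - p‖) : 0 ≤ ⟪derivWithin c J t, c t - p⟫ := by
  have hφ := ((hc.hasDerivWithinAt.mono hJ).sub_const p).norm_sq
  have hφ_nonneg := IsMaxOn.nonneg_of_hasDerivWithinAt_Icc hut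
    (fun s hs => pow_le_pow_left₀ (norm_nonneg _) (hmax s hs) 2) hφ
  rw [real_inner_comm]
  linarith

theorem norm_sub_le_of_inner_deriv_nonneg [FiniteDimensional ℝ E] {K : NNReal} {a b : ℝ} {p : E}
    (hab : a ≤ b) (hc : LipschitzOnWith K c (Icc a b))
    (hder : ∀ x ∈ Ioo a b, DifferentiableAt ℝ c x → 0 ≤ ⟪deriv c x, c x - p⟫) :
    ‖c a - p‖ ≤ ‖c b - p‖ := by
  have hdist : LipschitzOnWith K (fun s => ‖c s - p‖) (uIcc a b) := by
    rw [uIcc_of_le hab]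
    simpa [Function.comp_def, ← dist_eq_norm] using
      (LipschitzWith.dist_left p).comp_lipschitzOnWith hc
  have hφ : AbsolutelyContinuousOnInterval (fun s => ‖c s - p‖ ^ 2) a b := by
    simpa only [sq] using hdist.absolutelyContinuousOnInterval.fun_mul
      hdist.absolutelyContinuousOnInterval
  refine (pow_le_pow_iff_left₀ (norm_nonneg _) (norm_nonneg _) two_ne_zero).1
    (hφ.le_of_ae_deriv_nonneg hab ?_)
  filter_upwards [hc.ae_differentiableWithinAt_of_mem] with x hx hxab
  have hdx : DifferentiableAt ℝ c x :=
    (hx (Ioo_subset_Icc_self hxab)).differentiableAt (Icc_mem_nhds hxab.1 hxab.2)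
  rw [(hdx.hasDerivAt.sub_const p).norm_sq.deriv, real_inner_comm]
  exact mul_nonneg zero_le_two (hder x hxab hdx)

end InnerProductSpace

theorem selfContracted_iff_norm_reverse_le {n : ℕ} {I : Set ℝ}
    {γ : ℝ → EuclideanSpace ℝ (Fin n)} :
    SelfContracted I γ ↔ ∀ u ∈ -I, ∀ a ∈ -I, ∀ b ∈ -I, u ≤ a → a ≤ b →
      ‖γ (-a) - γ (-u)‖ ≤ ‖γ (-b) - γ (-u)‖ := by
  refine ⟨fun h u hu a ha b hb hua hab => h _ hb _ ha _ hu (neg_le_neg hab) (neg_le_neg hua),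
    fun h t₁ h₁ t₂ h₂ t₃ h₃ h₁₂ h₂₃ => ?_⟩
  simpa using h (-t₃) (by simpa) (-t₂) (by simpa) (-t₁) (by simpa)
    (neg_le_neg h₂₃) (neg_le_neg h₁₂)

/-- A Lipschitz curve `γ : I → ℝⁿ` is self-contracted if and only if its reverse
parametrization `γ⁻ : -I → ℝⁿ`, `γ⁻(t) = γ(-t)`, is self-expanded. -/
theorem selfContracted_iff_reverse_selfExpanded {n : ℕ} (I : Set ℝ) (hI : I.OrdConnected)
    (γ : ℝ → EuclideanSpace ℝ (Fin n)) (K : NNReal) (hγ : LipschitzOnWith K γ I) :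
    SelfContracted I γ ↔ SelfExpanded (-I) (fun t => γ (-t)) := by
  have hIneg := hI.neg
  rw [selfContracted_iff_norm_reverse_le]
  constructor
  · refine fun h => ⟨⟨K, hγ.comp_neg⟩, fun t ht hd u hu hut => ?_⟩
    rcases hut.eq_or_lt with rfl | hut
    · simp
    exact inner_derivWithin_sub_nonneg_of_isMaxOn hut (hIneg.out hu ht) hd
      fun s hs => h u hu s (hIneg.out hu ht hs) t ht hs.1 hs.2
  · rintro ⟨-, h⟩ u hu a ha b hb hua hab
    have hsub : Icc a b ⊆ -I := hIneg.out ha hb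
    refine norm_sub_le_of_inner_deriv_nonneg (c := fun t => γ (-t)) hab (hγ.comp_neg.mono hsub)
      fun x hx hdx => ?_
    have hnhds : -I ∈ 𝓝 x := mem_of_superset (Icc_mem_nhds hx.1 hx.2) hsub
    simpa [derivWithin_of_mem_nhds hnhds] using
      h x (hsub (Ioo_subset_Icc_self hx)) hdx.differentiableWithinAt u hu (hua.trans hx.1.le)
end

section
/- Let Σ be a subset of the unit sphere S^{n−1} ⊆ ℝ^n such that ⟨x, y⟩ ≤ 1/2 for all x, y ∈ Σ with x ≠ y. Then Σ is finite and its cardinality is at most 3^n. -/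
/-!
The open balls of radius `1/2` around the points of `Σ` are pairwise disjoint, since distinct
unit vectors with `⟪x, y⟫ ≤ 1/2` satisfy `‖x - y‖² = 2 - 2⟪x, y⟫ ≥ 1`, and they all lie in the
ball of radius `3/2` around the origin. Comparing Lebesgue measures, which scale like `rⁿ`,
gives `|Σ| (1/2)ⁿ ≤ (3/2)ⁿ`.
-/

open Set Metric RealInnerProductSpace MeasureTheory Measure Module

section Packing

variable {E : Type*} [NormedAddCommGroup E] [NormedSpace ℝ E] [FiniteDimensional ℝ E]

theorem Finset.card_le_of_subset_closedBall_of_pairwise_le_dist {t : Finset E} {c : E}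
    {R ε : ℝ} (hR : 0 ≤ R) (hε : 0 < ε) (ht : (t : Set E) ⊆ closedBall c R)
    (hsep : (t : Set E).Pairwise fun x y => ε ≤ dist x y) :
    (t.card : ℝ) ≤ ((2 * R + ε) / ε) ^ finrank ℝ E := by
  borelize E
  set μ : Measure E := Measure.addHaar
  set K := (2 * R + ε) / ε
  have hK : 0 < K := by positivity
  have hdisj : (t : Set E).PairwiseDisjoint (ball · (ε / 2)) := fun x hx y hy hxy =>
    ball_disjoint_ball (by linarith [hsep hx hy hxy])
  have hsub : ⋃ x ∈ t, ball x (ε / 2) ⊆ ball c (K * (ε / 2)) := by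
    refine iUnion₂_subset fun x hx => ball_subset_ball' ?_
    have hKε : K * (ε / 2) = R + ε / 2 := by simp only [K]; field_simp
    linarith [mem_closedBall.mp (ht hx)]
  have hball_pos : μ (ball 0 (ε / 2)) ≠ 0 := (measure_ball_pos μ _ (half_pos hε)).ne'
  have hball_lt_top : μ (ball 0 (ε / 2)) ≠ ⊤ := measure_ball_lt_top.ne
  have hvol : (t.card : ENNReal) * μ (ball 0 (ε / 2)) ≤
      ENNReal.ofReal (K ^ finrank ℝ E) * μ (ball 0 (ε / 2)) :=
    calc (t.card : ENNReal) * μ (ball 0 (ε / 2)) = ∑ x ∈ t, μ (ball x (ε / 2)) := by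
          simp [addHaar_ball_center]
      _ = μ (⋃ x ∈ t, ball x (ε / 2)) :=
          (measure_biUnion_finset hdisj fun _ _ => measurableSet_ball).symm
      _ ≤ μ (ball c (K * (ε / 2))) := measure_mono hsub
      _ = ENNReal.ofReal (K ^ finrank ℝ E) * μ (ball 0 (ε / 2)) :=
          addHaar_ball_mul_of_pos μ c hK _
  have hcard := (ENNReal.mul_le_mul_iff_left hball_pos hball_lt_top).mp hvol
  rwa [← ENNReal.ofReal_natCast, ENNReal.ofReal_le_ofReal_iff (by positivity)] at hcard

theorem Set.finite_and_ncard_le_of_subset_closedBall_of_pairwise_le_dist {S : Set E} {c : E}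
    {R ε : ℝ} (hR : 0 ≤ R) (hε : 0 < ε) (hS : S ⊆ closedBall c R)
    (hsep : S.Pairwise fun x y => ε ≤ dist x y) :
    S.Finite ∧ (S.ncard : ℝ) ≤ ((2 * R + ε) / ε) ^ finrank ℝ E := by
  have hbound : ∀ t : Finset E, (t : Set E) ⊆ S →
      (t.card : ℝ) ≤ ((2 * R + ε) / ε) ^ finrank ℝ E := fun t ht =>
    t.card_le_of_subset_closedBall_of_pairwise_le_dist hR hε (ht.trans hS) (hsep.mono ht)
  have hfin : S.Finite := by
    by_contra hinf
    obtain ⟨t, hts, htcard⟩ :=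
      Set.Infinite.exists_subset_card_eq hinf (⌊((2 * R + ε) / ε) ^ finrank ℝ E⌋₊ + 1)
    have := (hbound t hts).trans_lt (Nat.lt_floor_add_one _)
    rw [htcard] at this
    push_cast at this
    exact lt_irrefl _ this
  refine ⟨hfin, ?_⟩
  rw [Set.ncard_eq_toFinset_card S hfin]
  exact hbound _ hfin.coe_toFinset.subset

end Packing

theorem one_le_dist_of_inner_le_half {F : Type*} [NormedAddCommGroup F] [InnerProductSpace ℝ F]
    {x y : F} (hx : ‖x‖ = 1) (hy : ‖y‖ = 1) (hxy : ⟪x, y⟫ ≤ 1 / 2) : 1 ≤ dist x y := by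
  have hsq : ‖x - y‖ ^ 2 = 2 - 2 * ⟪x, y⟫ := by
    rw [norm_sub_sq_real, hx, hy]; ring
  rw [dist_eq_norm]
  nlinarith [norm_nonneg (x - y)]

/-- If `Σ` is a subset of the unit sphere `S^{n-1} ⊆ ℝⁿ` such that `⟪x, y⟫ ≤ 1/2` for all
distinct `x, y ∈ Σ`, then `Σ` is finite with cardinality at most `3 ^ n`. -/
theorem sphere_packing_card_le {n : ℕ} (S : Set (EuclideanSpace ℝ (Fin n)))
    (hS : S ⊆ Metric.sphere (0 : EuclideanSpace ℝ (Fin n)) 1)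
    (h : ∀ x ∈ S, ∀ y ∈ S, x ≠ y → ⟪x, y⟫ ≤ 1 / 2) :
    S.Finite ∧ S.ncard ≤ 3 ^ n := by
  have hnorm : ∀ x ∈ S, ‖x‖ = 1 := fun x hx => by simpa using hS hx
  have hsep : S.Pairwise fun x y => 1 ≤ dist x y := fun x hx y hy hxy =>
    one_le_dist_of_inner_le_half (hnorm x hx) (hnorm y hy) (h x hx y hy hxy)
  obtain ⟨hfin, hcard⟩ := S.finite_and_ncard_le_of_subset_closedBall_of_pairwise_le_dist
    zero_le_one one_pos (hS.trans sphere_subset_closedBall) hsep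
  norm_num [finrank_euclideanSpace] at hcard
  exact ⟨hfin, by exact_mod_cast hcard⟩
end

section
/- Let Σ be a nonempty subset of the unit sphere S^{n−1} ⊆ ℝ^n such that ⟨x, y⟩ ≥ −(1/3)^{n+1} for all x, y ∈ Σ. Then there exists ζ ∈ S^{n−1} such that ⟨ζ, x⟩ ≥ (1/3)^{2n+1} for all x ∈ Σ. -/
open Set Metric RealInnerProductSpace

/-!
By Carathéodory, a point `p` of the convex hull of `Σ` is a convex combination `∑ wᵢ zᵢ` of at
most `n + 1` points of `Σ`. With `ε = (1/3)^(n+1)`, expanding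
`‖p‖² + ε = ∑ᵢⱼ wᵢ wⱼ (⟪zᵢ, zⱼ⟫ + ε)` into nonnegative terms and keeping the diagonal gives
`‖p‖² ≥ ∑ wᵢ² - ε ≥ 1/(n+1) - ε`, so the closed convex hull stays away from the origin. Its
point `v` of minimal norm satisfies `⟪v, x⟫ ≥ ‖v‖²` on the hull, and `ζ = v / ‖v‖` works.
-/

section

variable {E : Type*} [NormedAddCommGroup E] [InnerProductSpace ℝ E]

theorem norm_sq_sum_smul_add_eq_sum_sum {ι : Type*} [Fintype ι] (z : ι → E) {w : ι → ℝ}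
    (hw1 : ∑ i, w i = 1) (ε : ℝ) :
    ‖∑ i, w i • z i‖ ^ 2 + ε = ∑ i, ∑ j, w i * w j * (⟪z i, z j⟫ + ε) := by
  have hε : ∑ i, ∑ j, w i * w j * ε = ε := by
    simp only [← Finset.sum_mul, ← Finset.mul_sum, hw1, mul_one, one_mul]
  calc ‖∑ i, w i • z i‖ ^ 2 + ε
      = ∑ i, ∑ j, w i * w j * ⟪z i, z j⟫ + ∑ i, ∑ j, w i * w j * ε := by
        simp_rw [hε, ← real_inner_self_eq_norm_sq, sum_inner, inner_sum, real_inner_smul_left,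
          real_inner_smul_right, mul_assoc]
    _ = ∑ i, ∑ j, w i * w j * (⟪z i, z j⟫ + ε) := by
        simp_rw [mul_add, Finset.sum_add_distrib]

theorem one_add_mul_sum_sq_le_norm_sq_sum_smul_add {ι : Type*} [Fintype ι] {z : ι → E}
    {w : ι → ℝ} {ε : ℝ} (hz : ∀ i, ‖z i‖ = 1) (hzz : ∀ i j, -ε ≤ ⟪z i, z j⟫)
    (hw : ∀ i, 0 ≤ w i) (hw1 : ∑ i, w i = 1) :
    (1 + ε) * ∑ i, w i ^ 2 ≤ ‖∑ i, w i • z i‖ ^ 2 + ε := by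
  rw [norm_sq_sum_smul_add_eq_sum_sum z hw1, Finset.mul_sum]
  refine Finset.sum_le_sum fun i _ => ?_
  have hnonneg : ∀ j ∈ Finset.univ, 0 ≤ w i * w j * (⟪z i, z j⟫ + ε) := fun j _ =>
    mul_nonneg (mul_nonneg (hw i) (hw j)) (by linarith [hzz i j])
  have hdiag : w i * w i * (⟪z i, z i⟫ + ε) = (1 + ε) * w i ^ 2 := by
    rw [real_inner_self_eq_norm_sq, hz i]
    ring
  exact hdiag ▸ Finset.single_le_sum hnonneg (Finset.mem_univ i)

theorem one_div_le_sum_sq_of_card_le {ι : Type*} [Fintype ι] {w : ι → ℝ} (hw1 : ∑ i, w i = 1)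
    {m : ℝ} (hm : Fintype.card ι ≤ m) : 1 / m ≤ ∑ i, w i ^ 2 := by
  have hcs := sq_sum_le_card_mul_sum_sq (s := Finset.univ) (f := w)
  rw [hw1, Finset.card_univ] at hcs
  have hcard : (0 : ℝ) < Fintype.card ι := by
    rw [Nat.cast_pos, Fintype.card_pos_iff]
    by_contra hempty
    simp [not_nonempty_iff.mp hempty] at hw1
  calc 1 / m ≤ 1 / Fintype.card ι := one_div_le_one_div_of_le hcard hm
    _ ≤ ∑ i, w i ^ 2 := by rw [div_le_iff₀ hcard]; linarith

theorem one_div_finrank_succ_sub_le_norm_sq_of_mem_convexHull [FiniteDimensional ℝ E]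
    {s : Set E} {ε : ℝ} (hε : 0 ≤ ε) (hs : ∀ x ∈ s, ‖x‖ = 1)
    (h : ∀ x ∈ s, ∀ y ∈ s, -ε ≤ ⟪x, y⟫) {p : E} (hp : p ∈ convexHull ℝ s) :
    1 / (Module.finrank ℝ E + 1) - ε ≤ ‖p‖ ^ 2 := by
  obtain ⟨ι, _, z, w, hzs, hz_indep, hw, hw1, rfl⟩ := eq_pos_convex_span_of_mem_convexHull hp
  have hzs' : ∀ i, z i ∈ s := fun i => hzs (mem_range_self i)
  have hcard : (Fintype.card ι : ℝ) ≤ Module.finrank ℝ E + 1 := by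
    have := hz_indep.card_le_finrank_succ.trans
      (Nat.succ_le_succ (Submodule.finrank_le (vectorSpan ℝ (range z))))
    exact_mod_cast this
  have hsq := one_div_le_sum_sq_of_card_le hw1 hcard
  have hmain := one_add_mul_sum_sq_le_norm_sq_sum_smul_add (fun i => hs _ (hzs' i))
    (fun i j => h _ (hzs' i) _ (hzs' j)) (fun i => (hw i).le) hw1
  have : ∑ i, w i ^ 2 ≤ (1 + ε) * ∑ i, w i ^ 2 :=
    le_mul_of_one_le_left (Finset.sum_nonneg fun i _ => sq_nonneg (w i)) (by linarith)
  linarith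

theorem exists_mem_sphere_le_inner_of_le_norm {K : Set E} (hne : K.Nonempty)
    (hcomplete : IsComplete K) (hconv : Convex ℝ K) {r : ℝ} (hr : 0 < r)
    (hK : ∀ x ∈ K, r ≤ ‖x‖) : ∃ ζ ∈ sphere (0 : E) 1, ∀ x ∈ K, r ≤ ⟪ζ, x⟫ := by
  obtain ⟨v, hvK, hvmin⟩ := exists_norm_eq_iInf_of_complete_convex hne hcomplete hconv 0
  have hv : 0 < ‖v‖ := hr.trans_le (hK v hvK)
  have hvx : ∀ x ∈ K, ‖v‖ ^ 2 ≤ ⟪v, x⟫ := fun x hx => by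
    have := (norm_eq_iInf_iff_real_inner_le_zero hconv hvK).mp hvmin x hx
    rw [zero_sub, inner_neg_left, inner_sub_right, real_inner_self_eq_norm_sq] at this
    linarith
  refine ⟨‖v‖⁻¹ • v, by simp [norm_smul, hv.ne'], fun x hx => ?_⟩
  calc r ≤ ‖v‖ := hK v hvK
    _ = ‖v‖⁻¹ * ‖v‖ ^ 2 := by field_simp
    _ ≤ ‖v‖⁻¹ * ⟪v, x⟫ := by gcongr; exact hvx x hx
    _ = ⟪‖v‖⁻¹ • v, x⟫ := (real_inner_smul_left v x _).symm

end

theorem one_third_pow_sq_add_le (n : ℕ) :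
    ((1 / 3 : ℝ) ^ (2 * n + 1)) ^ 2 + (1 / 3) ^ (n + 1) ≤ 1 / (n + 1) := by
  set q : ℝ := (1 / 3) ^ (n + 1)
  have hq : q * 3 ^ (n + 1) = 1 := by rw [← mul_pow]; norm_num
  have hbernoulli : 1 + ((n + 1 : ℕ) : ℝ) * 2 ≤ (1 + 2) ^ (n + 1) :=
    one_add_mul_le_pow (by norm_num) _
  have hsq : ((1 / 3 : ℝ) ^ (2 * n + 1)) ^ 2 ≤ q := by
    rw [← pow_mul]
    exact pow_le_pow_of_le_one (by norm_num) (by norm_num) (by omega)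
  norm_num at hbernoulli
  rw [le_div_iff₀ (by positivity)]
  calc (((1 / 3 : ℝ) ^ (2 * n + 1)) ^ 2 + q) * (n + 1) ≤ q * (2 * (n + 1)) := by
        nlinarith [show (0 : ℝ) ≤ n + 1 by positivity]
    _ ≤ q * 3 ^ (n + 1) := by gcongr; linarith
    _ = 1 := hq

/-- Hemisphere lemma: if `Σ` is a nonempty subset of the unit sphere `S^{n-1} ⊆ ℝⁿ` with
`⟪x, y⟫ ≥ -(1/3)^(n+1)` for all `x, y ∈ Σ`, then there is a unit vector `ζ` with
`⟪ζ, x⟫ ≥ (1/3)^(2n+1)` for all `x ∈ Σ`. -/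
theorem hemisphere_lemma {n : ℕ} (S : Set (EuclideanSpace ℝ (Fin n)))
    (hne : S.Nonempty)
    (hS : S ⊆ Metric.sphere (0 : EuclideanSpace ℝ (Fin n)) 1)
    (h : ∀ x ∈ S, ∀ y ∈ S, -((1 / 3 : ℝ) ^ (n + 1)) ≤ ⟪x, y⟫) :
    ∃ ζ ∈ Metric.sphere (0 : EuclideanSpace ℝ (Fin n)) 1,
      ∀ x ∈ S, (1 / 3 : ℝ) ^ (2 * n + 1) ≤ ⟪ζ, x⟫ := by
  have hnorm : ∀ x ∈ S, ‖x‖ = 1 := fun x hx => mem_sphere_zero_iff_norm.mp (hS hx)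
  have hhull : ∀ p ∈ convexHull ℝ S, (1 / 3 : ℝ) ^ (2 * n + 1) ≤ ‖p‖ := fun p hp => by
    have := one_div_finrank_succ_sub_le_norm_sq_of_mem_convexHull (by positivity) hnorm h hp
    rw [finrank_euclideanSpace_fin] at this
    rw [← pow_le_pow_iff_left₀ (by positivity) (norm_nonneg p) two_ne_zero]
    linarith [one_third_pow_sq_add_le n]
  have hclosure : ∀ p ∈ closure (convexHull ℝ S), (1 / 3 : ℝ) ^ (2 * n + 1) ≤ ‖p‖ :=
    closure_minimal hhull (isClosed_le continuous_const continuous_norm)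
  obtain ⟨ζ, hζ, hζK⟩ := exists_mem_sphere_le_inner_of_le_norm
    (hne.mono (subset_convexHull ℝ S |>.trans subset_closure)) isClosed_closure.isComplete
    (convex_convexHull ℝ S).closure (by positivity) hclosure
  exact ⟨ζ, hζ, fun x hx => hζK x (subset_closure (subset_convexHull ℝ S hx))⟩
end

section
/- Let γ : [0, T∞) → ℝ^n (T∞ ∈ (0, ∞]) be a self-contracted curve with bounded image. Then γ(t) converges to some point γ_∞ ∈ ℝ^n as t → T∞. -/
/-!
By compactness the bounded curve has a cluster point `p` as `t → T∞`. Self-contractedness upgrades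
this to convergence: if `γ s` is close to `p` and `s ≤ t ≤ u` with `γ u` also close to `p`, then
`‖γ t - γ u‖ ≤ ‖γ s - γ u‖` is small, so `γ t` is close to `p` for every `t ≥ s`.
-/

open Set Metric

open Filter Topology

section

variable {ι X : Type*} [PseudoMetricSpace X] {f : ι → X}

theorem tendsto_atTop_of_mapClusterPt_of_dist_le [SemilatticeSup ι] [Nonempty ι] {p : X}
    (hf : ∀ s t u, s ≤ t → t ≤ u → dist (f t) (f u) ≤ dist (f s) (f u))
    (hp : MapClusterPt p atTop f) : Tendsto f atTop (𝓝 p) := by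
  have hfreq : ∀ δ > 0, ∀ a, ∃ b, a ≤ b ∧ dist (f b) p < δ := fun δ hδ =>
    frequently_atTop.1 (mapClusterPt_iff_frequently.1 hp _ (ball_mem_nhds p hδ))
  rw [Metric.tendsto_atTop]
  intro ε hε
  obtain ⟨s, -, hs⟩ := hfreq (ε / 3) (by positivity) (Classical.arbitrary ι)
  refine ⟨s, fun t hst => ?_⟩
  obtain ⟨u, htu, hu⟩ := hfreq (ε / 3) (by positivity) t
  calc dist (f t) p ≤ dist (f t) (f u) + dist (f u) p := dist_triangle _ _ _
    _ ≤ dist (f s) (f u) + dist (f u) p := by gcongr; exact hf s t u hst htu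
    _ ≤ dist (f s) p + dist (f u) p + dist (f u) p := by gcongr; exact dist_triangle_right _ _ _
    _ < ε := by linarith

theorem Bornology.IsBounded.exists_mapClusterPt [ProperSpace X] {l : Filter ι} [l.NeBot]
    (hf : Bornology.IsBounded (range f)) :
    ∃ p, MapClusterPt p l f := by
  obtain ⟨p, -, hp⟩ := hf.isCompact_closure.exists_mapClusterPt (f := l) (u := f)
    (tendsto_principal.2 (Eventually.of_forall fun i => subset_closure (mem_range_self i)))
  exact ⟨p, hp⟩

theorem exists_tendsto_atTop_of_dist_le [SemilatticeSup ι] [Nonempty ι] [ProperSpace X]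
    (hf : ∀ s t u, s ≤ t → t ≤ u → dist (f t) (f u) ≤ dist (f s) (f u))
    (hbd : Bornology.IsBounded (range f)) : ∃ p, Tendsto f atTop (𝓝 p) :=
  let ⟨p, hp⟩ := hbd.exists_mapClusterPt (l := atTop)
  ⟨p, tendsto_atTop_of_mapClusterPt_of_dist_le hf hp⟩

end

/-- A bounded self-contracted curve `γ : [0, T∞) → ℝⁿ` (with `T∞ ∈ (0, ∞]`) converges to
some point `γ∞ ∈ ℝⁿ` as `t → T∞`. -/
theorem selfContracted_converges {n : ℕ} (T : ENNReal) (hT : 0 < T) (I : Set ℝ)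
    (hI : I = {t : ℝ | 0 ≤ t ∧ ENNReal.ofReal t < T})
    (γ : ℝ → EuclideanSpace ℝ (Fin n)) (hγ : SelfContracted I γ)
    (hbd : Bornology.IsBounded (γ '' I)) :
    ∃ p : EuclideanSpace ℝ (Fin n),
      ∀ ε > (0 : ℝ), ∃ t₀ ∈ I, ∀ t ∈ I, t₀ ≤ t → ‖γ t - p‖ < ε := by
  have : Nonempty I := ⟨⟨0, hI ▸ ⟨le_rfl, by simpa using hT⟩⟩⟩
  obtain ⟨p, hp⟩ := exists_tendsto_atTop_of_dist_le (f := fun t : I => γ t)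
    (fun s t u hst htu => by simpa only [dist_eq_norm] using hγ s s.2 t t.2 u u.2 hst htu)
    (by rwa [← image_eq_range])
  refine ⟨p, fun ε hε => ?_⟩
  obtain ⟨t₀, ht₀⟩ := Metric.tendsto_atTop.1 hp ε hε
  exact ⟨t₀, t₀.2, fun t ht hle => by simpa only [dist_eq_norm] using ht₀ ⟨t, ht⟩ hle⟩
end
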